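/- arXiv:1907.13389 — 6 statements merged into one kernel-verified Lean document; each statement's English description precedes it below -/
import Mathlib

section
/- Let f ∈ W^{s,p}(ℝ^n) (Sobolev–Slobodeckij space with 0 < s < 1, 1 ≤ p < ∞) and let f^ε = f * φ^ε be its mollification with a standard mollifier φ^ε. Then ‖f − f^ε‖_{L^p(ℝ^n)} ≤ C ε^s ‖f‖_{W^{s,p}(ℝ^n)}, where C depends only on n, s, p and the mollifier. -/
open MeasureTheory

private lemma jensen_aux {α : Type*} [MeasurableSpace α] {μ : Measure α} {w F : α → ENNReal}
    (hw : AEMeasurable w μ) (hF : AEMeasurable F μ) (hw1 : ∫⁻ a, w a ∂μ = 1)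
    {p : ℝ} (hp : 1 ≤ p) :
    (∫⁻ a, F a * w a ∂μ) ^ p ≤ ∫⁻ a, F a ^ p * w a ∂μ := by
  rcases eq_or_lt_of_le hp with h1 | h1
  · simp only [← h1, ENNReal.rpow_one]
    exact le_refl _
  · have hp0 : p ≠ 0 := by linarith
    have hpq : p.HolderConjugate p.conjExponent := Real.HolderConjugate.conjExponent h1
    set q := p.conjExponent with hq
    have hq0 : q ≠ 0 := hpq.symm.pos.ne'
    have e1 : ∀ a, F a * w a = (F a * w a ^ (1 / p)) * (w a ^ (1 / q)) := by
      intro a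
      rw [mul_assoc, ← ENNReal.rpow_add_of_nonneg _ _ (div_nonneg zero_le_one hpq.pos.le) (div_nonneg zero_le_one hpq.symm.pos.le)]
      rw [one_div, one_div, hpq.inv_add_inv_eq_one, ENNReal.rpow_one]
    have e2 : ∀ a, (F a * w a ^ (1 / p)) ^ p = F a ^ p * w a := by
      intro a
      rw [ENNReal.mul_rpow_of_nonneg _ _ (by positivity), ← ENNReal.rpow_mul, one_div,
        inv_mul_cancel₀ hp0, ENNReal.rpow_one]
    have e3 : ∀ a, (w a ^ (1 / q)) ^ q = w a := by
      intro a
      rw [← ENNReal.rpow_mul, one_div, inv_mul_cancel₀ hq0, ENNReal.rpow_one]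
    have key := ENNReal.lintegral_mul_le_Lp_mul_Lq μ hpq
      (f := fun a => F a * w a ^ (1 / p)) (g := fun a => w a ^ (1 / q))
      (hF.mul (hw.pow_const _)) (hw.pow_const _)
    simp only [Pi.mul_apply] at key
    have key2 : ∫⁻ a, F a * w a ∂μ ≤ (∫⁻ a, F a ^ p * w a ∂μ) ^ (1 / p) := by
      calc ∫⁻ a, F a * w a ∂μ
          = ∫⁻ a, (F a * w a ^ (1 / p)) * (w a ^ (1 / q)) ∂μ := lintegral_congr e1
        _ ≤ (∫⁻ a, (F a * w a ^ (1 / p)) ^ p ∂μ) ^ (1 / p)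
              * (∫⁻ a, (w a ^ (1 / q)) ^ q ∂μ) ^ (1 / q) := key
        _ = (∫⁻ a, F a ^ p * w a ∂μ) ^ (1 / p) * (∫⁻ a, w a ∂μ) ^ (1 / q) := by
            rw [lintegral_congr e2, lintegral_congr e3]
        _ = (∫⁻ a, F a ^ p * w a ∂μ) ^ (1 / p) := by
            rw [hw1, ENNReal.one_rpow, mul_one]
    calc (∫⁻ a, F a * w a ∂μ) ^ p
        ≤ ((∫⁻ a, F a ^ p * w a ∂μ) ^ (1 / p)) ^ p :=
          ENNReal.rpow_le_rpow key2 (by positivity)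
      _ = ∫⁻ a, F a ^ p * w a ∂μ := by
          rw [← ENNReal.rpow_mul, one_div, inv_mul_cancel₀ hp0, ENNReal.rpow_one]

private lemma lintegral_sub_left_eq {n : ℕ} (h : EuclideanSpace ℝ (Fin n) → ENNReal)
    (a : EuclideanSpace ℝ (Fin n)) : ∫⁻ y, h (a - y) = ∫⁻ y, h y := by
  calc ∫⁻ y, h (a - y)
      = ∫⁻ y, (fun z => h (a + z)) ((MeasurableEquiv.neg (EuclideanSpace ℝ (Fin n))) y) := by
        apply lintegral_congr; intro y
        simp [sub_eq_add_neg, MeasurableEquiv.neg]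
    _ = ∫⁻ z, h (a + z)
          ∂(Measure.map (⇑(MeasurableEquiv.neg (EuclideanSpace ℝ (Fin n)))) volume) :=
        (lintegral_map_equiv (fun z => h (a + z)) _).symm
    _ = ∫⁻ z, h (a + z) := by
        rw [show ⇑(MeasurableEquiv.neg (EuclideanSpace ℝ (Fin n)))
            = (Neg.neg : EuclideanSpace ℝ (Fin n) → EuclideanSpace ℝ (Fin n)) from rfl,
          Measure.map_neg_eq_self]
    _ = ∫⁻ y, h y := lintegral_add_left_eq_self h a

/-- rate of convergence of mollification in `L^p` for `W^{s,p}` functions. -/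
theorem mollification_rate_Wsp (n : ℕ) (s p : ℝ) (hs : 0 < s) (hs1 : s < 1) (hp : 1 ≤ p)
    (φ : EuclideanSpace ℝ (Fin n) → ℝ) (hφ : ContDiff ℝ (⊤ : ℕ∞) φ)
    (hφnn : ∀ x, 0 ≤ φ x) (hφsupp : Function.support φ ⊆ Metric.ball 0 1)
    (hφint : ∫ x, φ x = 1) :
    ∃ C : ℝ, 0 < C ∧
      ∀ f : EuclideanSpace ℝ (Fin n) → ℝ, Integrable f volume →
      Integrable (fun q : EuclideanSpace ℝ (Fin n) × EuclideanSpace ℝ (Fin n) =>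
        |f q.1 - f q.2| ^ p / ‖q.1 - q.2‖ ^ (s * p + n)) volume →
      ∀ ε : ℝ, 0 < ε →
      eLpNorm (fun x => f x - ∫ y, f (x - y) * ((ε ^ n)⁻¹ * φ (ε⁻¹ • y)))
          (ENNReal.ofReal p) volume
        ≤ ENNReal.ofReal (C * ε ^ s *
            (∫ q : EuclideanSpace ℝ (Fin n) × EuclideanSpace ℝ (Fin n),
              |f q.1 - f q.2| ^ p / ‖q.1 - q.2‖ ^ (s * p + n)) ^ (1 / p)) := by
  have hp0 : (0:ℝ) < p := lt_of_lt_of_le one_pos hp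
  have hφcs : HasCompactSupport φ := HasCompactSupport.intro (isCompact_closedBall 0 1)
    (fun x hx => by
      by_contra h
      exact hx (Metric.ball_subset_closedBall (hφsupp (Function.mem_support.mpr h))))
  obtain ⟨M, hM⟩ := hφcs.exists_bound_of_continuous hφ.continuous
  set M1 : ℝ := max M 1 with hM1def
  have hM1 : (0:ℝ) < M1 := lt_of_lt_of_le one_pos (le_max_right _ _)
  have hMabs : ∀ z, |φ z| ≤ M := fun z => by rw [← Real.norm_eq_abs]; exact hM z
  have hφM1 : ∀ z, φ z ≤ M1 :=
    fun z => le_trans (le_trans (le_abs_self _) (hMabs z)) (le_max_left _ _)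
  refine ⟨M1 ^ (1/p), Real.rpow_pos_of_pos hM1 _, ?_⟩
  intro f hf h2 ε hε
  have hεn : (0:ℝ) < ε ^ n := pow_pos hε n
  set φε : EuclideanSpace ℝ (Fin n) → ℝ := fun y => (ε ^ n)⁻¹ * φ (ε⁻¹ • y) with hφεdef
  have hφεnn : ∀ y, 0 ≤ φε y := fun y => mul_nonneg (inv_nonneg.mpr hεn.le) (hφnn _)
  have hφεcont : Continuous φε :=
    continuous_const.mul (hφ.continuous.comp (continuous_const_smul _))
  have hφInt : Integrable φ := hφ.continuous.integrable_of_hasCompactSupport hφcs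
  have hφεint : Integrable φε :=
    (((integrable_comp_smul_iff volume φ (inv_ne_zero hε.ne')).mpr hφInt).const_mul _)
  have hφεint1 : ∫ y, φε y = 1 := by
    have h := Measure.integral_comp_inv_smul volume φ ε
    rw [finrank_euclideanSpace_fin] at h
    rw [hφεdef]
    simp only
    rw [integral_const_mul, h, hφint, smul_eq_mul, mul_one, abs_of_pos hεn,
      inv_mul_cancel₀ hεn.ne']
  have hlφε : ∫⁻ y, ENNReal.ofReal (φε y) = 1 := by
    rw [← ofReal_integral_eq_lintegral_ofReal hφεint (Filter.Eventually.of_forall hφεnn),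
      hφεint1, ENNReal.ofReal_one]
  set g : EuclideanSpace ℝ (Fin n) → ℝ := fun x => f x - ∫ y, f (x - y) * φε y with hgdef
  have hconv : ∀ x, Integrable (fun y => f (x - y) * φε y) := by
    intro x
    have h1 : Integrable (fun y => f (x - y)) := hf.comp_sub_left x
    have h3 : Integrable (fun y => φε y * f (x - y)) :=
      h1.bdd_mul (c := (ε ^ n)⁻¹ * M1) hφεcont.aestronglyMeasurable (Filter.Eventually.of_forall fun y => by
        rw [Real.norm_eq_abs, hφεdef]
        simp only
        rw [abs_mul, abs_of_nonneg (inv_nonneg.mpr hεn.le)]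
        exact mul_le_mul_of_nonneg_left (le_trans (hMabs _) (le_max_left _ _))
          (inv_nonneg.mpr hεn.le))
    exact h3.congr (Filter.Eventually.of_forall fun y => mul_comm _ _)
  have hg_eq : ∀ x, g x = ∫ y, (f x - f (x - y)) * φε y := by
    intro x
    have h2' : Integrable (fun y => f x * φε y) := hφεint.const_mul (f x)
    calc g x = (∫ y, f x * φε y) - ∫ y, f (x - y) * φε y := by
          rw [hgdef]; simp only
          rw [integral_const_mul, hφεint1, mul_one]
      _ = ∫ y, (f x * φε y - f (x - y) * φε y) := (integral_sub h2' (hconv x)).symm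
      _ = ∫ y, (f x - f (x - y)) * φε y := by
          apply integral_congr_ae; apply Filter.Eventually.of_forall; intro y; ring
  -- Step A : Jensen
  have stepA : ∀ x, (‖g x‖₊ : ENNReal) ^ p
      ≤ ∫⁻ y, ENNReal.ofReal (|f x - f (x - y)| ^ p) * ENNReal.ofReal (φε y) := by
    intro x
    have hsub : AEStronglyMeasurable (fun y => f (x - y)) volume :=
      (hf.comp_sub_left x).aestronglyMeasurable
    have hFm : AEMeasurable (fun y => (‖f x - f (x - y)‖₊ : ENNReal)) volume :=
      (aestronglyMeasurable_const.sub hsub).enorm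
    have hwm : AEMeasurable (fun y => ENNReal.ofReal (φε y)) volume :=
      (ENNReal.measurable_ofReal.comp hφεcont.measurable).aemeasurable
    have h1 : (‖g x‖₊ : ENNReal)
        ≤ ∫⁻ y, (‖f x - f (x - y)‖₊ : ENNReal) * ENNReal.ofReal (φε y) := by
      rw [hg_eq x]
      refine le_trans (enorm_integral_le_lintegral_enorm _) (le_of_eq ?_)
      apply lintegral_congr; intro y
      rw [enorm_mul]
      congr 1
      rw [Real.enorm_eq_ofReal_abs, abs_of_nonneg (hφεnn y)]
    calc (‖g x‖₊ : ENNReal) ^ p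
        ≤ (∫⁻ y, (‖f x - f (x - y)‖₊ : ENNReal) * ENNReal.ofReal (φε y)) ^ p :=
          ENNReal.rpow_le_rpow h1 hp0.le
      _ ≤ ∫⁻ y, (‖f x - f (x - y)‖₊ : ENNReal) ^ p * ENNReal.ofReal (φε y) :=
          jensen_aux hwm hFm hlφε hp
      _ = ∫⁻ y, ENNReal.ofReal (|f x - f (x - y)| ^ p) * ENNReal.ofReal (φε y) := by
          apply lintegral_congr; intro y
          rw [← enorm_eq_nnnorm, Real.enorm_eq_ofReal_abs, ENNReal.ofReal_rpow_of_nonneg (abs_nonneg _) hp0.le]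
  -- the double integrand
  set D : EuclideanSpace ℝ (Fin n) × EuclideanSpace ℝ (Fin n) → ℝ :=
    fun q => |f q.1 - f q.2| ^ p / ‖q.1 - q.2‖ ^ (s * p + n) with hDdef
  have hDnn : ∀ q, 0 ≤ D q := fun q =>
    div_nonneg (Real.rpow_nonneg (abs_nonneg _) _) (Real.rpow_nonneg (norm_nonneg _) _)
  -- Step B : pointwise bound
  have stepB : ∀ x y, ENNReal.ofReal (|f x - f (x - y)| ^ p) * ENNReal.ofReal (φε y)
      ≤ ENNReal.ofReal (M1 * ε ^ (s * p)) * ENNReal.ofReal (D (x, x - y)) := by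
    intro x y
    by_cases hy0 : φ (ε⁻¹ • y) = 0
    · have hz : φε y = 0 := by rw [hφεdef]; simp [hy0]
      simp [hz]
    · have hmem : ε⁻¹ • y ∈ Metric.ball (0 : EuclideanSpace ℝ (Fin n)) 1 :=
        hφsupp (Function.mem_support.mpr hy0)
      have hylt : ‖y‖ < ε := by
        have h := mem_ball_zero_iff.mp hmem
        rw [norm_smul, Real.norm_eq_abs, abs_of_pos (inv_pos.mpr hε)] at h
        calc ‖y‖ = ε * (ε⁻¹ * ‖y‖) := by field_simp
          _ < ε * 1 := by
              exact mul_lt_mul_of_pos_left h hε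
          _ = ε := mul_one ε
      by_cases hyy : y = 0
      · subst hyy
        simp [sub_zero, sub_self, Real.zero_rpow hp0.ne']
      · have hr : 0 < ‖y‖ := norm_pos_iff.mpr hyy
        have hD : D (x, x - y) = |f x - f (x - y)| ^ p / ‖y‖ ^ (s * p + n) := by
          rw [hDdef]; simp only; rw [sub_sub_cancel]
        rw [hD, ← ENNReal.ofReal_mul (Real.rpow_nonneg (abs_nonneg _) _),
          ← ENNReal.ofReal_mul (by positivity)]
        apply ENNReal.ofReal_le_ofReal
        have hA0 : (0:ℝ) ≤ |f x - f (x - y)| ^ p := Real.rpow_nonneg (abs_nonneg _) _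
        have hsp : (0:ℝ) < s * p + n := by positivity
        have hrsp : (0:ℝ) < ‖y‖ ^ (s * p + n) := Real.rpow_pos_of_pos hr _
        set A : ℝ := |f x - f (x - y)| ^ p with hA
        have hQ0 : (0:ℝ) ≤ A / ‖y‖ ^ (s * p + n) := div_nonneg hA0 hrsp.le
        calc A * φε y
            = A / ‖y‖ ^ (s * p + n) * ‖y‖ ^ (s * p + n) * ((ε ^ n)⁻¹ * φ (ε⁻¹ • y)) := by
              rw [div_mul_cancel₀ _ hrsp.ne', hφεdef]
          _ ≤ A / ‖y‖ ^ (s * p + n) * ε ^ (s * p + (n:ℝ)) * ((ε ^ n)⁻¹ * M1) := by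
              gcongr ?_ * ?_ * ((ε ^ n)⁻¹ * ?_) <;>
                first
                | exact le_refl _
                | exact mul_nonneg (inv_nonneg.mpr hεn.le) (hφnn _)
                | exact Real.rpow_le_rpow (norm_nonneg _) hylt.le hsp.le
                | exact hφM1 _
          _ = M1 * ε ^ (s * p) * (A / ‖y‖ ^ (s * p + n)) := by
              rw [Real.rpow_add hε, Real.rpow_natCast]
              field_simp
  -- assemble
  have hI2 : Integrable D (volume.prod volume) := by
    rw [← Measure.volume_eq_prod]; exact h2
  have hDm : AEMeasurable (fun q => ENNReal.ofReal (D q)) (volume.prod volume) :=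
    hI2.aestronglyMeasurable.aemeasurable.ennreal_ofReal
  have main : ∫⁻ x, (‖g x‖₊ : ENNReal) ^ p
      ≤ ENNReal.ofReal (M1 * ε ^ (s * p) * ∫ q, D q) := by
    calc ∫⁻ x, (‖g x‖₊ : ENNReal) ^ p
        ≤ ∫⁻ x, ∫⁻ y, ENNReal.ofReal (|f x - f (x - y)| ^ p) * ENNReal.ofReal (φε y) :=
          lintegral_mono stepA
      _ ≤ ∫⁻ x, ∫⁻ y, ENNReal.ofReal (M1 * ε ^ (s * p)) * ENNReal.ofReal (D (x, x - y)) :=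
          lintegral_mono fun x => lintegral_mono fun y => stepB x y
      _ = ENNReal.ofReal (M1 * ε ^ (s * p)) * ∫⁻ x, ∫⁻ y, ENNReal.ofReal (D (x, x - y)) := by
          simp_rw [lintegral_const_mul' _ _ ENNReal.ofReal_ne_top]
      _ = ENNReal.ofReal (M1 * ε ^ (s * p)) * ∫⁻ x, ∫⁻ z, ENNReal.ofReal (D (x, z)) := by
          congr 1
          apply lintegral_congr; intro x
          exact lintegral_sub_left_eq (fun z => ENNReal.ofReal (D (x, z))) x
      _ = ENNReal.ofReal (M1 * ε ^ (s * p))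
            * ∫⁻ q, ENNReal.ofReal (D q) ∂(volume.prod volume) := by
          congr 1
          rw [lintegral_lintegral (f := fun x z => ENNReal.ofReal (D (x, z))) (by
            convert hDm using 1; rfl)]
      _ = ENNReal.ofReal (M1 * ε ^ (s * p)) * ENNReal.ofReal (∫ q, D q) := by
          rw [← ofReal_integral_eq_lintegral_ofReal hI2 (Filter.Eventually.of_forall hDnn),
            ← Measure.volume_eq_prod]
      _ = ENNReal.ofReal (M1 * ε ^ (s * p) * ∫ q, D q) := by
          rw [← ENNReal.ofReal_mul (by positivity)]
  have hI0 : (0:ℝ) ≤ ∫ q, D q :=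
    integral_nonneg hDnn
  have hpne : ENNReal.ofReal p ≠ 0 := by
    simp only [ne_eq, ENNReal.ofReal_eq_zero, not_le]; exact hp0
  have htop : ENNReal.ofReal p ≠ ⊤ := ENNReal.ofReal_ne_top
  calc eLpNorm g (ENNReal.ofReal p) volume
      = (∫⁻ x, (‖g x‖₊ : ENNReal) ^ p) ^ (1/p) := by
        rw [eLpNorm_eq_lintegral_rpow_enorm_toReal hpne htop, ENNReal.toReal_ofReal hp0.le]
        rfl
    _ ≤ (ENNReal.ofReal (M1 * ε ^ (s * p) * ∫ q, D q)) ^ (1/p) :=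
        ENNReal.rpow_le_rpow main (by positivity)
    _ = ENNReal.ofReal ((M1 * ε ^ (s * p) * ∫ q, D q) ^ (1/p)) :=
        ENNReal.ofReal_rpow_of_nonneg (by positivity) (by positivity)
    _ = ENNReal.ofReal (M1 ^ (1/p) * ε ^ s * (∫ q, D q) ^ (1/p)) := by
        congr 1
        rw [Real.mul_rpow (by positivity) hI0,
          Real.mul_rpow hM1.le (Real.rpow_nonneg hε.le _), ← Real.rpow_mul hε.le,
          mul_one_div, mul_div_cancel_right₀ _ hp0.ne']
end

section
/- Let u : Ω → [0,∞) be measurable on a finite-measure set Ω ⊂ ℝ^n and 1 < p < ∞. Then ‖u‖_{L¹(Ω)} ≤ (p/(p−1)) |||u|||_{M¹(Ω)} [1 + log( (‖u‖_{L^p(Ω)} / |||u|||_{M¹(Ω)}) ℒ^n(Ω)^{1−1/p} )]. -/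
open MeasureTheory

/-!
Write `∫ u = ∫₀^∞ d t dt` (layer cake) with `d t = |{x ∈ Ω | u x > t}|`. The distribution function
obeys three bounds: `d ≤ |Ω|`, `d t ≤ W / t`, and `d t ≤ ‖u‖ₚᵖ / tᵖ` (Chebyshev). Using each on the
range where it is best, `(0, a]`, `(a, b]` and `(b, ∞)` with `|Ω| a = W` and `‖u‖ₚᵖ b^{1-p} = W`,
gives `∫ u ≤ W + W log (b / a) + W / (p - 1)`, which is the claimed bound. The split needs `a ≤ b`,
i.e. `W ≤ ‖u‖ₚ |Ω|^{1-1/p}`; this holds because the first and third bounds already give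
`t d t ≤ ‖u‖ₚ |Ω|^{1-1/p}`.
-/

open Set Real
open scoped ENNReal

section DistributionFunction

variable {d : ℝ → ℝ≥0∞} {a b p V W I : ℝ}

theorem setLIntegral_Ioc_le_mul_log (hW : 0 ≤ W) (ha : 0 < a) (hab : a ≤ b)
    (hd : ∀ t ∈ Ioc a b, d t ≤ ENNReal.ofReal (W / t)) :
    ∫⁻ t in Ioc a b, d t ≤ ENNReal.ofReal (W * log (b / a)) := by
  have hnonneg : 0 ≤ᵐ[volume.restrict (Ioc a b)] fun t => W / t :=
    ae_restrict_of_forall_mem measurableSet_Ioc fun t ht => div_nonneg hW (ha.trans ht.1).le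
  have hint : IntegrableOn (fun t => W / t) (Ioc a b) :=
    ((continuousOn_const.div continuousOn_id fun t ht => (ha.trans_le ht.1).ne').integrableOn_Icc
      ).mono_set Ioc_subset_Icc_self
  calc ∫⁻ t in Ioc a b, d t ≤ ∫⁻ t in Ioc a b, ENNReal.ofReal (W / t) :=
        setLIntegral_mono (by fun_prop) hd
    _ = ENNReal.ofReal (∫ t in Ioc a b, W / t) :=
        (ofReal_integral_eq_lintegral_ofReal hint hnonneg).symm
    _ = ENNReal.ofReal (W * log (b / a)) := by
        rw [← intervalIntegral.integral_of_le hab, ← integral_inv_of_pos ha (ha.trans_le hab),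
          ← intervalIntegral.integral_const_mul]
        rfl

theorem setLIntegral_Ioi_le_rpow (hp : 1 < p) (hI : 0 ≤ I) (hb : 0 < b)
    (hd : ∀ t ∈ Ioi b, d t ≤ ENNReal.ofReal (I / t ^ p)) :
    ∫⁻ t in Ioi b, d t ≤ ENNReal.ofReal (I * b ^ (1 - p) / (p - 1)) := by
  have hdiv_eq : ∀ t ∈ Ioi b, I / t ^ p = I * t ^ (-p) := fun t ht => by
    rw [rpow_neg (hb.trans ht).le, div_eq_mul_inv]
  have hnonneg : 0 ≤ᵐ[volume.restrict (Ioi b)] fun t => I * t ^ (-p) :=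
    ae_restrict_of_forall_mem measurableSet_Ioi fun t ht =>
      mul_nonneg hI (rpow_nonneg (hb.trans ht).le _)
  have hint : IntegrableOn (fun t => I * t ^ (-p)) (Ioi b) :=
    (integrableOn_Ioi_rpow_of_lt (by linarith) hb).const_mul I
  calc ∫⁻ t in Ioi b, d t ≤ ∫⁻ t in Ioi b, ENNReal.ofReal (I * t ^ (-p)) :=
        setLIntegral_mono (by fun_prop) fun t ht => (hd t ht).trans_eq (by rw [hdiv_eq t ht])
    _ = ENNReal.ofReal (∫ t in Ioi b, I * t ^ (-p)) :=
        (ofReal_integral_eq_lintegral_ofReal hint hnonneg).symm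
    _ = ENNReal.ofReal (I * b ^ (1 - p) / (p - 1)) := by
        rw [integral_const_mul, integral_Ioi_rpow_of_lt (by linarith) hb, neg_add_eq_sub,
          neg_div, ← div_neg, neg_sub, mul_div_assoc]

theorem setLIntegral_Ioi_zero_le_of_distribution_bounds (hp : 1 < p) (ha : 0 < a) (hab : a ≤ b)
    (hV : 0 ≤ V) (hW : 0 ≤ W) (hI : 0 ≤ I) (hdV : ∀ t, d t ≤ ENNReal.ofReal V)
    (hdW : ∀ t > 0, d t ≤ ENNReal.ofReal (W / t))
    (hdI : ∀ t > 0, d t ≤ ENNReal.ofReal (I / t ^ p)) :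
    ∫⁻ t in Ioi 0, d t ≤
      ENNReal.ofReal (V * a + W * log (b / a) + I * b ^ (1 - p) / (p - 1)) := by
  have hb : 0 < b := ha.trans_le hab
  have hlog : 0 ≤ W * log (b / a) := mul_nonneg hW (log_nonneg ((one_le_div ha).2 hab))
  have hfirst : ∫⁻ t in Ioc 0 a, d t ≤ ENNReal.ofReal (V * a) :=
    calc ∫⁻ t in Ioc 0 a, d t ≤ ∫⁻ _ in Ioc 0 a, ENNReal.ofReal V := lintegral_mono hdV
      _ = ENNReal.ofReal (V * a) := by
          rw [setLIntegral_const, Real.volume_Ioc, sub_zero, ENNReal.ofReal_mul hV]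
  rw [← Ioc_union_Ioi_eq_Ioi ha.le, lintegral_union measurableSet_Ioi Ioc_disjoint_Ioi_same,
    ← Ioc_union_Ioi_eq_Ioi hab, lintegral_union measurableSet_Ioi Ioc_disjoint_Ioi_same,
    ENNReal.ofReal_add (by positivity) (by positivity), ENNReal.ofReal_add (by positivity) hlog,
    add_assoc]
  exact add_le_add hfirst <| add_le_add
    (setLIntegral_Ioc_le_mul_log hW ha hab fun t ht => hdW t (ha.trans ht.1))
    (setLIntegral_Ioi_le_rpow hp hI hb fun t ht => hdI t (hb.trans ht))

end DistributionFunction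

theorem mul_le_rpow_of_rpow_mul_le {t d V I p : ℝ} (hp : 1 ≤ p) (ht : 0 ≤ t) (hd : 0 ≤ d)
    (hdV : d ≤ V) (h : t ^ p * d ≤ I) : t * d ≤ (I * V ^ (p - 1)) ^ (1 / p) := by
  have hp0 : 0 < p := by linarith
  have hdp : d ^ p = d * d ^ (p - 1) := by
    rw [← rpow_one_add' hd (by linarith), add_sub_cancel]
  have hpow : (t * d) ^ p ≤ I * V ^ (p - 1) :=
    calc (t * d) ^ p = t ^ p * d * d ^ (p - 1) := by rw [mul_rpow ht hd, hdp, mul_assoc]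
      _ ≤ I * V ^ (p - 1) :=
          mul_le_mul h (rpow_le_rpow hd hdV (by linarith)) (by positivity)
            ((by positivity : (0 : ℝ) ≤ t ^ p * d).trans h)
  calc t * d = ((t * d) ^ p) ^ (1 / p) := by rw [one_div, rpow_rpow_inv (by positivity) hp0.ne']
    _ ≤ (I * V ^ (p - 1)) ^ (1 / p) := by gcongr

section DistributionOfFunction

variable {α : Type*} [MeasurableSpace α] {μ : Measure α} [IsFiniteMeasure μ] {f : α → ℝ}
  {p t : ℝ}

theorem rpow_mul_measureReal_lt_le_integral_rpow (hf : 0 ≤ᵐ[μ] f)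
    (hfp : Integrable (fun x => f x ^ p) μ) (hp : 0 ≤ p) (ht : 0 ≤ t) :
    t ^ p * μ.real {x | t < f x} ≤ ∫ x, f x ^ p ∂μ :=
  calc t ^ p * μ.real {x | t < f x} ≤ t ^ p * μ.real {x | t ^ p ≤ f x ^ p} :=
        mul_le_mul_of_nonneg_left (measureReal_mono fun x hx => rpow_le_rpow ht (le_of_lt hx) hp)
          (rpow_nonneg ht p)
    _ ≤ ∫ x, f x ^ p ∂μ :=
        mul_meas_ge_le_integral_of_nonneg (hf.mono fun x hx => rpow_nonneg hx p) hfp _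

theorem mul_measureReal_lt_le_rpow (hf : 0 ≤ᵐ[μ] f) (hfp : Integrable (fun x => f x ^ p) μ)
    (hp : 1 ≤ p) (ht : 0 ≤ t) :
    t * μ.real {x | t < f x} ≤ ((∫ x, f x ^ p ∂μ) * μ.real univ ^ (p - 1)) ^ (1 / p) :=
  mul_le_rpow_of_rpow_mul_le hp ht measureReal_nonneg (measureReal_mono (subset_univ _))
    (rpow_mul_measureReal_lt_le_integral_rpow hf hfp (by linarith) ht)

theorem integral_le_of_mul_measureReal_lt_le (hf : 0 ≤ᵐ[μ] f) (hfm : AEMeasurable f μ)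
    (hp : 1 < p) (hfp : Integrable (fun x => f x ^ p) μ) {W a b : ℝ} (hW : 0 ≤ W)
    (hweak : ∀ t > 0, t * μ.real {x | t < f x} ≤ W) (ha : 0 < a) (hab : a ≤ b) :
    ∫ x, f x ∂μ ≤
      μ.real univ * a + W * log (b / a) + (∫ x, f x ^ p ∂μ) * b ^ (1 - p) / (p - 1) := by
  have hle_ofReal : ∀ {t c M : ℝ}, 0 < c → c * μ.real {x | t < f x} ≤ M →
      μ {x | t < f x} ≤ ENNReal.ofReal (M / c) := fun hc h => by
    rw [← ofReal_measureReal]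
    exact ENNReal.ofReal_le_ofReal ((le_div_iff₀' hc).2 h)
  have hI : 0 ≤ ∫ x, f x ^ p ∂μ := integral_nonneg_of_ae (hf.mono fun x hx => rpow_nonneg hx p)
  have hlog : 0 ≤ W * log (b / a) := mul_nonneg hW (log_nonneg ((one_le_div ha).2 hab))
  rw [integral_eq_lintegral_of_nonneg_ae hf hfm.aestronglyMeasurable,
    lintegral_eq_lintegral_meas_lt μ hf hfm]
  refine ENNReal.toReal_le_of_le_ofReal
    (add_nonneg (add_nonneg (by positivity) hlog)
      (div_nonneg (mul_nonneg hI (rpow_nonneg (ha.le.trans hab) _)) (by linarith))) ?_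
  refine setLIntegral_Ioi_zero_le_of_distribution_bounds hp ha hab measureReal_nonneg hW hI
    (fun t => ?_) (fun t ht => hle_ofReal ht (hweak t ht))
    (fun t ht => hle_ofReal (rpow_pos_of_pos ht p)
      (rpow_mul_measureReal_lt_le_integral_rpow hf hfp (by linarith) ht.le))
  rw [← ofReal_measureReal]
  exact ENNReal.ofReal_le_ofReal (measureReal_mono (subset_univ _))

end DistributionOfFunction

section Exponents

variable {p V W I : ℝ}

theorem pos_of_le_rpow_mul_rpow (hp : 1 < p) (hV : 0 ≤ V) (hI : 0 ≤ I) (hW : 0 < W)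
    (hWI : W ≤ (I * V ^ (p - 1)) ^ (1 / p)) : 0 < I ∧ 0 < V := by
  have hprod : I * V ^ (p - 1) ≠ 0 := by
    intro h
    rw [h, zero_rpow (by positivity)] at hWI
    linarith
  refine ⟨hI.lt_of_ne' (left_ne_zero_of_mul hprod), hV.lt_of_ne' fun hV0 => ?_⟩
  rw [hV0, zero_rpow (by linarith), mul_zero] at hprod
  exact hprod rfl

theorem div_le_rpow_of_le_rpow_mul_rpow (hp : 1 < p) (hV : 0 < V) (hI : 0 < I) (hW : 0 < W)
    (hWI : W ≤ (I * V ^ (p - 1)) ^ (1 / p)) : W / V ≤ (I / W) ^ (1 / (p - 1)) := by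
  rw [one_div] at hWI ⊢
  rw [le_rpow_inv_iff_of_pos hW.le (by positivity) (by linarith)] at hWI
  rwa [le_rpow_inv_iff_of_pos (by positivity) (by positivity) (by linarith),
    div_rpow hW.le hV.le, div_le_div_iff₀ (by positivity) hW, rpow_sub_one hW.ne',
    div_mul_cancel₀ _ hW.ne']

theorem interpolation_bound_eq (hp : 1 < p) (hV : 0 < V) (hW : 0 < W) (hI : 0 < I) :
    V * (W / V) + W * log ((I / W) ^ (1 / (p - 1)) / (W / V)) +
        I * ((I / W) ^ (1 / (p - 1))) ^ (1 - p) / (p - 1) =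
      p / (p - 1) * W * (1 + log (I ^ (1 / p) / W * V ^ (1 - 1 / p))) := by
  have hp1 : p - 1 ≠ 0 := by linarith
  have htail : I * ((I / W) ^ (1 / (p - 1))) ^ (1 - p) = W := by
    rw [← rpow_mul (by positivity), show 1 / (p - 1) * (1 - p) = -1 by field_simp; ring,
      rpow_neg_one, inv_div, mul_div_cancel₀ _ hI.ne']
  rw [htail, mul_div_cancel₀ _ hV.ne', log_div (by positivity) (by positivity),
    log_rpow (by positivity), log_div hI.ne' hW.ne', log_div hW.ne' hV.ne',
    log_mul (by positivity) (by positivity), log_div (by positivity) hW.ne', log_rpow hI,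
    log_rpow hV]
  field_simp
  ring

end Exponents

theorem interpolation_L1_weakL1_Lp_general (n : ℕ) (Ω : Set (EuclideanSpace ℝ (Fin n)))
    (hfin : volume Ω < ⊤)
    (u : EuclideanSpace ℝ (Fin n) → ℝ) (hu : Measurable u) (hnn : ∀ x ∈ Ω, 0 ≤ u x)
    (p : ℝ) (hp : 1 < p)
    (hLp : IntegrableOn (fun x => u x ^ p) Ω volume)
    (W : ℝ) (hWpos : 0 < W)
    (hW : IsLUB {y : ℝ | ∃ lam > (0 : ℝ),
      y = lam * (volume {x ∈ Ω | lam < u x}).toReal} W) :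
    ∫ x in Ω, u x ≤ (p / (p - 1)) * W *
      (1 + Real.log ((∫ x in Ω, u x ^ p) ^ (1 / p) / W *
        (volume Ω).toReal ^ (1 - 1 / p))) := by
  set μ := volume.restrict Ω
  have : IsFiniteMeasure μ := isFiniteMeasure_restrict.2 hfin.ne
  have hu_nonneg : 0 ≤ᵐ[μ] u :=
    (ae_restrict_iff (measurableSet_le measurable_const hu)).2 (ae_of_all _ hnn)
  have hμ_lt : ∀ t, μ.real {x | t < u x} = (volume {x ∈ Ω | t < u x}).toReal := fun t => by
    rw [measureReal_def, Measure.restrict_apply (measurableSet_lt measurable_const hu)]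
    congr 2
    ext x
    exact and_comm
  have hμ_univ : μ.real univ = (volume Ω).toReal := measureReal_restrict_apply_univ Ω
  have hweak : ∀ t > 0, t * μ.real {x | t < u x} ≤ W := fun t ht => hW.1 ⟨t, ht, by rw [hμ_lt]⟩
  have hW_le : W ≤ ((∫ x in Ω, u x ^ p) * (volume Ω).toReal ^ (p - 1)) ^ (1 / p) := by
    refine hW.2 ?_
    rintro _ ⟨t, ht, rfl⟩
    rw [← hμ_lt, ← hμ_univ]
    exact mul_measureReal_lt_le_rpow hu_nonneg hLp hp.le ht.le
  obtain ⟨hI, hV⟩ := pos_of_le_rpow_mul_rpow hp ENNReal.toReal_nonneg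
    (integral_nonneg_of_ae (hu_nonneg.mono fun x hx => rpow_nonneg hx p)) hWpos hW_le
  rw [← hμ_univ] at hV hW_le ⊢
  rw [← interpolation_bound_eq hp hV hWpos hI]
  exact integral_le_of_mul_measureReal_lt_le hu_nonneg hu.aemeasurable hp hLp hWpos.le hweak
    (by positivity) (div_le_rpow_of_le_rpow_mul_rpow hp hV hI hWpos hW_le)

/-- logarithmic interpolation of `L¹` between weak-`L¹` and `L^p`, `1 < p < ∞`. -/
theorem interpolation_L1_weakL1_Lp (n : ℕ) (Ω : Set (EuclideanSpace ℝ (Fin n)))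
    (hΩ : MeasurableSet Ω) (hfin : volume Ω < ⊤)
    (u : EuclideanSpace ℝ (Fin n) → ℝ) (hu : Measurable u) (hnn : ∀ x ∈ Ω, 0 ≤ u x)
    (p : ℝ) (hp : 1 < p)
    (hLp : IntegrableOn (fun x => u x ^ p) Ω volume)
    (W : ℝ) (hWpos : 0 < W)
    (hW : IsLUB {y : ℝ | ∃ lam > (0 : ℝ),
      y = lam * (volume {x ∈ Ω | lam < u x}).toReal} W) :
    ∫ x in Ω, u x ≤ (p / (p - 1)) * W *
      (1 + Real.log ((∫ x in Ω, u x ^ p) ^ (1 / p) / W *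
        (volume Ω).toReal ^ (1 - 1 / p))) :=
  interpolation_L1_weakL1_Lp_general n Ω hfin u hu hnn p hp hLp W hWpos hW
end

section
/- Let u : Ω → [0,∞) be measurable on a finite-measure set Ω ⊂ ℝ^n with u ∈ L^∞(Ω) and |||u|||_{M¹(Ω)} > 0. Then ‖u‖_{L¹(Ω)} ≤ |||u|||_{M¹(Ω)} [1 + log( (‖u‖_{L^∞(Ω)} / |||u|||_{M¹(Ω)}) ℒ^n(Ω) )]. -/
/-!
Let `g(t) = ℒⁿ{x ∈ Ω : u x > t}` be the distribution function of `u`. It is bounded by `M = ℒⁿ(Ω)`,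
by `W / t` (definition of the weak-`L¹` quasinorm `W`), and vanishes for `t ≥ K = ‖u‖_∞`. By the
layer-cake formula `∫_Ω u = ∫₀^K g`; cutting at `T = W / M` gives
`∫₀^T g ≤ T M = W` and `∫_T^K g ≤ ∫_T^K W / t = W log (K / T) = W log (K M / W)`.
-/

open MeasureTheory Set

namespace Interpolation

theorem intervalIntegral_le_mul_log_of_mul_le {g : ℝ → ℝ} {a b W : ℝ} (ha : 0 < a) (hab : a ≤ b)
    (hg : IntervalIntegrable g volume a b) (hgW : ∀ t ∈ Icc a b, t * g t ≤ W) :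
    ∫ t in a..b, g t ≤ W * Real.log (b / a) := by
  calc ∫ t in a..b, g t ≤ ∫ t in a..b, W * t⁻¹ := by
        refine intervalIntegral.integral_mono_on hab hg ?_ fun t ht => ?_
        · refine (continuousOn_const.mul (continuousOn_inv₀.mono fun t ht => ?_)).intervalIntegrable
          exact (ha.trans_le (uIcc_of_le hab ▸ ht).1).ne'
        · rw [← div_eq_mul_inv, le_div_iff₀ (ha.trans_le ht.1), mul_comm]
          exact hgW t ht
    _ = W * Real.log (b / a) := by
        rw [intervalIntegral.integral_const_mul, integral_inv_of_pos ha (ha.trans_le hab)]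

/-- The cut point `T = W / M` is where the two bounds `g ≤ M` and `g ≤ W / t` cross. -/
theorem intervalIntegral_le_mul_one_add_log {g : ℝ → ℝ} {K M W : ℝ} (hg : Antitone g)
    (hgM : ∀ t, g t ≤ M) (hgW : ∀ t > 0, t * g t ≤ W) (hM : 0 ≤ M) (hW : 0 < W)
    (hWK : W ≤ K * M) :
    ∫ t in 0..K, g t ≤ W * (1 + Real.log (K / W * M)) := by
  have hKM : 0 < K * M := hW.trans_le hWK
  have hMpos : 0 < M := lt_of_le_of_ne hM fun h => by simp [← h] at hKM
  set T := W / M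
  have hT : 0 < T := div_pos hW hMpos
  have hTK : T ≤ K := (div_le_iff₀ hMpos).2 hWK
  have hint : ∀ a b, IntervalIntegrable g volume a b :=
    fun a b => (hg.antitoneOn _).intervalIntegrable
  have hlow : ∫ t in 0..T, g t ≤ W := by
    calc ∫ t in 0..T, g t ≤ ∫ _ in 0..T, M :=
          intervalIntegral.integral_mono_on hT.le (hint 0 T) intervalIntegrable_const
            fun t _ => hgM t
      _ = W := by
        rw [intervalIntegral.integral_const, smul_eq_mul, sub_zero]
        exact div_mul_cancel₀ _ hMpos.ne'
  have hhigh : ∫ t in T..K, g t ≤ W * Real.log (K / W * M) := by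
    have hKT : K / T = K / W * M := by rw [div_div_eq_mul_div, div_mul_eq_mul_div]
    rw [← hKT]
    exact intervalIntegral_le_mul_log_of_mul_le hT hTK (hint T K)
      fun t ht => hgW t (hT.trans_le ht.1)
  rw [← intervalIntegral.integral_add_adjacent_intervals (hint 0 T) (hint T K)]
  linarith

section DistributionFunction

variable {α : Type*} [MeasurableSpace α] {μ : Measure α} {u : α → ℝ} {K : ℝ}

theorem antitone_measureReal_lt [IsFiniteMeasure μ] : Antitone fun t => μ.real {x | t < u x} :=
  fun _ _ hst => measureReal_mono fun _ hx => hst.trans_lt hx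

theorem integral_le_mul_measureReal_univ [IsFiniteMeasure μ] (hint : Integrable u μ)
    (hK : ∀ᵐ x ∂μ, u x ≤ K) : ∫ x, u x ∂μ ≤ K * μ.real univ := by
  simpa [mul_comm] using integral_mono_ae hint (integrable_const K) hK

theorem mul_measureReal_lt_le_integral (hint : Integrable u μ) (hnn : 0 ≤ᵐ[μ] u) {t : ℝ}
    (ht : 0 < t) : t * μ.real {x | t < u x} ≤ ∫ x, u x ∂μ :=
  calc t * μ.real {x | t < u x} ≤ t * μ.real {x | t ≤ u x} :=
        mul_le_mul_of_nonneg_left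
          (measureReal_mono (fun _ (hx : t < _) => hx.le) (hint.measure_ge_lt_top ht).ne) ht.le
    _ ≤ ∫ x, u x ∂μ := mul_meas_ge_le_integral_of_nonneg hnn hint t

theorem integral_eq_intervalIntegral_measureReal_lt [IsFiniteMeasure μ] (hint : Integrable u μ)
    (hnn : 0 ≤ᵐ[μ] u) (hK : ∀ᵐ x ∂μ, u x ≤ K) (hK0 : 0 ≤ K) :
    ∫ x, u x ∂μ = ∫ t in 0..K, μ.real {x | t < u x} := by
  have hnull : ∀ t, K ≤ t → μ.real {x | t < u x} = 0 := fun t ht => by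
    have : μ {x | t < u x} = 0 :=
      measure_mono_null (fun x hx hle => (ht.trans_lt hx).not_ge hle) (ae_iff.1 hK)
    simp [measureReal_def, this]
  rw [hint.integral_eq_integral_meas_lt hnn, intervalIntegral.integral_of_le hK0]
  exact setIntegral_eq_of_subset_of_forall_sdiff_eq_zero measurableSet_Ioi Ioc_subset_Ioi_self
    fun t ht => hnull t (not_le.1 fun h => ht.2 ⟨ht.1, h⟩).le

theorem integral_le_mul_one_add_log [IsFiniteMeasure μ] (hint : Integrable u μ)
    (hnn : 0 ≤ᵐ[μ] u) (hK : ∀ᵐ x ∂μ, u x ≤ K) {W : ℝ} (hW : 0 < W)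
    (hWK : W ≤ K * μ.real univ) (hweak : ∀ t > 0, t * μ.real {x | t < u x} ≤ W) :
    ∫ x, u x ∂μ ≤ W * (1 + Real.log (K / W * μ.real univ)) := by
  have hK0 : 0 ≤ K := (pos_of_mul_pos_left (hW.trans_le hWK) measureReal_nonneg).le
  rw [integral_eq_intervalIntegral_measureReal_lt hint hnn hK hK0]
  exact intervalIntegral_le_mul_one_add_log antitone_measureReal_lt
    (fun _ => measureReal_mono (subset_univ _)) hweak measureReal_nonneg hW hWK

end DistributionFunction

end Interpolation

open Interpolation

/-- logarithmic interpolation of `L¹` between weak-`L¹` and `L^∞`. -/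
theorem interpolation_L1_weakL1_Linfty (n : ℕ) (Ω : Set (EuclideanSpace ℝ (Fin n)))
    (hΩ : MeasurableSet Ω) (hfin : volume Ω < ⊤)
    (u : EuclideanSpace ℝ (Fin n) → ℝ) (hu : Measurable u) (hnn : ∀ x ∈ Ω, 0 ≤ u x)
    (K : ℝ) (hK : ∀ᵐ x ∂volume, x ∈ Ω → u x ≤ K)
    (W : ℝ) (hWpos : 0 < W)
    (hW : IsLUB {y : ℝ | ∃ lam > (0 : ℝ),
      y = lam * (volume {x ∈ Ω | lam < u x}).toReal} W) :
    ∫ x in Ω, u x ≤ W * (1 + Real.log (K / W * (volume Ω).toReal)) := by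
  have : IsFiniteMeasure (volume.restrict Ω) := isFiniteMeasure_restrict.2 hfin.ne
  have hnn' : 0 ≤ᵐ[volume.restrict Ω] u := (ae_restrict_iff' hΩ).2 (.of_forall hnn)
  have hK' : ∀ᵐ x ∂volume.restrict Ω, u x ≤ K := (ae_restrict_iff' hΩ).2 hK
  have hint : Integrable u (volume.restrict Ω) := .of_bound hu.aestronglyMeasurable K <| by
    filter_upwards [hnn', hK'] with x h0 hx
    rwa [Real.norm_eq_abs, abs_of_nonneg h0]
  have hdist : ∀ t, (volume.restrict Ω).real {x | t < u x} = (volume {x ∈ Ω | t < u x}).toReal :=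
    fun t => by rw [measureReal_restrict_apply' hΩ, inter_comm]; rfl
  have hM : (volume.restrict Ω).real univ = (volume Ω).toReal := by
    rw [measureReal_restrict_apply' hΩ, univ_inter]; rfl
  have hWK : W ≤ K * (volume Ω).toReal := hW.2 <| by
    rintro _ ⟨t, ht, rfl⟩
    rw [← hdist, ← hM]
    exact (mul_measureReal_lt_le_integral hint hnn' ht).trans
      (integral_le_mul_measureReal_univ hint hK')
  rw [← hM] at hWK ⊢
  exact integral_le_mul_one_add_log hint hnn' hK' hWpos hWK
    fun t ht => hdist t ▸ hW.1 ⟨t, ht, rfl⟩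
end

section
/- Let f ∈ C¹(ℝ^n) and x ≠ y in ℝ^n. Setting A = B((x+y)/2, |x−y|/2), one has |f(x) − f(y)| ≤ (|x−y|/|A|) [∫₀¹ ∫_A |Df(tx + (1−t)z)| dz dt + ∫₀¹ ∫_A |Df(ty + (1−t)z)| dz dt]. -/
open MeasureTheory

/-! For `z` in the ball `A`, both `x` and `y` lie within `‖x - y‖` of `z`, so the fundamental
theorem of calculus along the segments from `z` to `x` and to `y` bounds `|f x - f y|` by
`‖x - y‖` times the sum of the two segment integrals of `‖Df‖`. Averaging this bound over `z ∈ A`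
and exchanging the `z`- and `t`-integrals (the integrand is continuous on a compact set) gives
the estimate. -/

theorem norm_sub_lt_of_mem_ball_midpoint {E : Type*} [NormedAddCommGroup E] [NormedSpace ℝ E]
    {x y z : E} (hz : z ∈ Metric.ball ((1 / 2 : ℝ) • (x + y)) (‖x - y‖ / 2)) :
    ‖x - z‖ < ‖x - y‖ := by
  have hxm : ‖x - (1 / 2 : ℝ) • (x + y)‖ = ‖x - y‖ / 2 := by
    rw [show x - (1 / 2 : ℝ) • (x + y) = (1 / 2 : ℝ) • (x - y) by module, norm_smul]
    norm_num
    ring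
  rw [Metric.mem_ball, dist_eq_norm, norm_sub_rev] at hz
  linarith [norm_sub_le_norm_sub_add_norm_sub x ((1 / 2 : ℝ) • (x + y)) z]

section Segment

variable {E F : Type*} [NormedAddCommGroup E] [NormedSpace ℝ E]
  [NormedAddCommGroup F] [NormedSpace ℝ F] [CompleteSpace F]

theorem sub_eq_intervalIntegral_fderiv_segment {f : E → F} (hf : ContDiff ℝ 1 f) (a b : E) :
    f a - f b = ∫ t in (0:ℝ)..1, fderiv ℝ f (t • a + (1 - t) • b) (a - b) := by
  have hγ : ∀ t : ℝ, HasDerivAt (fun s : ℝ => s • a + (1 - s) • b) (a - b) t := fun t => by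
    have h := ((hasDerivAt_id t).smul_const a).add (((hasDerivAt_id t).const_sub 1).smul_const b)
    rwa [one_smul, neg_smul, one_smul, ← sub_eq_add_neg] at h
  have hderiv : ∀ t : ℝ, HasDerivAt (fun s : ℝ => f (s • a + (1 - s) • b))
      (fderiv ℝ f (t • a + (1 - t) • b) (a - b)) t := fun t =>
    ((hf.differentiable one_ne_zero _).hasFDerivAt).comp_hasDerivAt t (hγ t)
  have hcont : Continuous fun t : ℝ => fderiv ℝ f (t • a + (1 - t) • b) (a - b) := by
    have := hf.continuous_fderiv one_ne_zero
    fun_prop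
  rw [intervalIntegral.integral_eq_sub_of_hasDerivAt (fun t _ => hderiv t)
    (hcont.intervalIntegrable 0 1)]
  simp

theorem norm_sub_le_mul_intervalIntegral_norm_fderiv {f : E → F} (hf : ContDiff ℝ 1 f)
    (a b : E) :
    ‖f a - f b‖ ≤ ‖a - b‖ * ∫ t in (0:ℝ)..1, ‖fderiv ℝ f (t • a + (1 - t) • b)‖ := by
  have hcont : Continuous fun t : ℝ => ‖fderiv ℝ f (t • a + (1 - t) • b)‖ := by
    have := hf.continuous_fderiv one_ne_zero
    fun_prop
  rw [sub_eq_intervalIntegral_fderiv_segment hf, ← intervalIntegral.integral_const_mul]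
  refine intervalIntegral.norm_integral_le_of_norm_le zero_le_one
    (.of_forall fun t _ => ?_) ((hcont.const_mul _).intervalIntegrable 0 1)
  rw [mul_comm]
  exact (fderiv ℝ f _).le_opNorm _

theorem ContDiff.norm_sub_le_of_mem_ball_midpoint {f : E → F} (hf : ContDiff ℝ 1 f) {x y z : E}
    (hz : z ∈ Metric.ball ((1 / 2 : ℝ) • (x + y)) (‖x - y‖ / 2)) :
    ‖f x - f y‖ ≤ ‖x - y‖ * ((∫ t in (0:ℝ)..1, ‖fderiv ℝ f (t • x + (1 - t) • z)‖) +
      ∫ t in (0:ℝ)..1, ‖fderiv ℝ f (t • y + (1 - t) • z)‖) := by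
  have hxz : ‖x - z‖ ≤ ‖x - y‖ := (norm_sub_lt_of_mem_ball_midpoint hz).le
  have hyz : ‖y - z‖ ≤ ‖x - y‖ := by
    rw [norm_sub_rev x y]
    exact (norm_sub_lt_of_mem_ball_midpoint (by rwa [add_comm, norm_sub_rev])).le
  have hJ0 : ∀ a, 0 ≤ ∫ t in (0:ℝ)..1, ‖fderiv ℝ f (t • a + (1 - t) • z)‖ := fun a =>
    intervalIntegral.integral_nonneg zero_le_one fun _ _ => norm_nonneg _
  calc ‖f x - f y‖ ≤ ‖f x - f z‖ + ‖f y - f z‖ := by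
        simpa only [dist_eq_norm] using dist_triangle_right (f x) (f y) (f z)
    _ ≤ ‖x - z‖ * (∫ t in (0:ℝ)..1, ‖fderiv ℝ f (t • x + (1 - t) • z)‖) +
          ‖y - z‖ * ∫ t in (0:ℝ)..1, ‖fderiv ℝ f (t • y + (1 - t) • z)‖ :=
      add_le_add (norm_sub_le_mul_intervalIntegral_norm_fderiv hf x z)
        (norm_sub_le_mul_intervalIntegral_norm_fderiv hf y z)
    _ ≤ _ := by
      rw [mul_add]
      gcongr
      exacts [hJ0 x, hJ0 y]

end Segment

theorem intervalIntegral_setIntegral_swap_of_continuous {E F : Type*}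
    [NormedAddCommGroup E] [ProperSpace E] [MeasurableSpace E] [BorelSpace E]
    [NormedAddCommGroup F] [NormedSpace ℝ F]
    {μ : Measure E} [IsFiniteMeasureOnCompacts μ] {g : ℝ → E → F}
    (hg : Continuous (Function.uncurry g)) {s : Set E} (hs : Bornology.IsBounded s) (a b : ℝ) :
    ∫ t in a..b, ∫ z in s, g t z ∂μ = ∫ z in s, (∫ t in a..b, g t z) ∂μ := by
  refine intervalIntegral_integral_swap ?_
  rw [Measure.prod_restrict]
  exact (hg.continuousOn.integrableOn_compact (isCompact_uIcc.prod hs.isCompact_closure)).mono_set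
    (Set.prod_mono Set.uIoc_subset_uIcc subset_closure)

/-- averaging estimate over the midpoint ball for `C¹` functions. -/
theorem midpoint_ball_averaging (n : ℕ) (f : EuclideanSpace ℝ (Fin n) → ℝ)
    (hf : ContDiff ℝ 1 f) (x y : EuclideanSpace ℝ (Fin n)) (hxy : x ≠ y) :
    |f x - f y| ≤
      (‖x - y‖ / (volume (Metric.ball ((1 / 2 : ℝ) • (x + y)) (‖x - y‖ / 2))).toReal) *
        ((∫ t in (0:ℝ)..1, ∫ z in Metric.ball ((1 / 2 : ℝ) • (x + y)) (‖x - y‖ / 2),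
            ‖fderiv ℝ f (t • x + (1 - t) • z)‖) +
         (∫ t in (0:ℝ)..1, ∫ z in Metric.ball ((1 / 2 : ℝ) • (x + y)) (‖x - y‖ / 2),
            ‖fderiv ℝ f (t • y + (1 - t) • z)‖)) := by
  set A := Metric.ball ((1 / 2 : ℝ) • (x + y)) (‖x - y‖ / 2)
  set J : EuclideanSpace ℝ (Fin n) → EuclideanSpace ℝ (Fin n) → ℝ :=
    fun a z => ∫ t in (0:ℝ)..1, ‖fderiv ℝ f (t • a + (1 - t) • z)‖
  have hdf : Continuous (fderiv ℝ f) := hf.continuous_fderiv one_ne_zero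
  have hJ : ∀ a, IntegrableOn (J a) A := fun a =>
    ((intervalIntegral.continuous_parametric_intervalIntegral_of_continuous'
      (by fun_prop) 0 1).continuousOn.integrableOn_compact (isCompact_closedBall _ _)).mono_set
      Metric.ball_subset_closedBall
  have hA : 0 < (volume A).toReal :=
    ENNReal.toReal_pos (Metric.measure_ball_pos volume _ (by simpa using sub_ne_zero.2 hxy)).ne'
      measure_ball_lt_top.ne
  have havg := setIntegral_ge_of_const_le_real (c := |f x - f y|)
    (f := fun z => ‖x - y‖ * (J x z + J y z))
    measurableSet_ball measure_ball_lt_top.ne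
    (fun z hz => by rw [← Real.norm_eq_abs]; exact hf.norm_sub_le_of_mem_ball_midpoint hz)
    (((hJ x).add (hJ y)).const_mul _)
  rw [integral_const_mul, integral_add (hJ x) (hJ y)] at havg
  rw [intervalIntegral_setIntegral_swap_of_continuous (by fun_prop) Metric.isBounded_ball,
    intervalIntegral_setIntegral_swap_of_continuous (by fun_prop) Metric.isBounded_ball,
    div_mul_eq_mul_div, le_div_iff₀ hA]
  exact havg
end

section
/- Let f ∈ C¹(ℝ^n), x ≠ y, and for t ∈ [0,1) set B_{t,x} = B(x, (1−t)|x−y|). Then ∫₀¹ (1/|A|)(1/(1−t)) ∫_{B_{t,x}} |Df(w)| dw dt ≤ (2^n/n) MDf(x), where A = B((x+y)/2, |x−y|/2) and MDf is the maximal function of |Df|. -/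
open MeasureTheory ENNReal

/-- Hardy–Littlewood maximal function (of `‖g‖`). -/
noncomputable def maxFn {n : ℕ} {F : Type*} [NormedAddCommGroup F]
    (g : EuclideanSpace ℝ (Fin n) → F) (x : EuclideanSpace ℝ (Fin n)) : ℝ≥0∞ :=
  ⨆ r ∈ Set.Ioi (0 : ℝ),
    (∫⁻ z in Metric.ball x r, ‖g z‖₊ ∂volume) / volume (Metric.ball x r)

/-! The integral over `B_{t,x}` is at most `MDf(x) |B_{t,x}|`, and since `B_{t,x}` has radius
`2(1 - t)` times that of `A`, `|B_{t,x}| / ((1 - t)|A|) = 2ⁿ (1 - t)ⁿ⁻¹`, whose integral over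
`t ∈ (0, 1)` is `2ⁿ / n`. -/

open Metric Module Set

theorem addHaar_ball_eq_ofReal_div_pow_mul {E : Type*} [NormedAddCommGroup E] [NormedSpace ℝ E]
    [MeasurableSpace E] [BorelSpace E] [FiniteDimensional ℝ E] (μ : Measure E)
    [μ.IsAddHaarMeasure] (x y : E) {r s : ℝ} (hr : 0 < r) (hs : 0 < s) :
    μ (ball x r) = ENNReal.ofReal ((r / s) ^ finrank ℝ E) * μ (ball y s) := by
  rw [Measure.addHaar_ball_of_pos μ x hr, Measure.addHaar_ball_of_pos μ y hs, ← mul_assoc,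
    ← ENNReal.ofReal_mul (by positivity), div_pow, div_mul_cancel₀ _ (by positivity)]

theorem lintegral_Ioo_ofReal_one_sub_pow (k : ℕ) :
    ∫⁻ t in Ioo (0 : ℝ) 1, ENNReal.ofReal ((1 - t) ^ k) = ((k + 1 : ℕ) : ℝ≥0∞)⁻¹ := by
  have hcont : Continuous fun t : ℝ => (1 - t) ^ k := by fun_prop
  have hint : ∫ t in Ioo (0 : ℝ) 1, (1 - t) ^ k = ((k : ℝ) + 1)⁻¹ := by
    rw [← integral_Ioc_eq_integral_Ioo, ← intervalIntegral.integral_of_le zero_le_one,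
      intervalIntegral.integral_comp_sub_left (fun u : ℝ => u ^ k) 1]
    simp [integral_pow]
  rw [← ofReal_integral_eq_lintegral_ofReal
      ((hcont.integrableOn_Icc (a := 0) (b := 1)).mono_set Ioo_subset_Icc_self)
      ((ae_restrict_mem measurableSet_Ioo).mono fun t ht => pow_nonneg (by linarith [ht.2]) k),
    hint, ENNReal.ofReal_inv_of_pos (by positivity)]
  norm_cast

section MaximalFunction

variable {n : ℕ} {F : Type*} [NormedAddCommGroup F] (g : EuclideanSpace ℝ (Fin n) → F)

theorem lintegral_ball_le_maxFn_mul_volume (x : EuclideanSpace ℝ (Fin n)) {r : ℝ} (hr : 0 < r) :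
    ∫⁻ z in ball x r, ‖g z‖₊ ≤ maxFn g x * volume (ball x r) := by
  have haverage : (∫⁻ z in ball x r, ‖g z‖₊) / volume (ball x r) ≤ maxFn g x :=
    le_iSup₂ (f := fun r (_ : r ∈ Ioi (0 : ℝ)) =>
      (∫⁻ z in ball x r, ‖g z‖₊) / volume (ball x r)) r hr
  exact (ENNReal.div_le_iff (measure_ball_pos volume x hr).ne' measure_ball_lt_top.ne).mp haverage

theorem lintegral_ball_div_le_maxFn (hn : 0 < n) (x z : EuclideanSpace ℝ (Fin n)) {d s : ℝ}
    (hd : 0 < d) (hs : 0 < s) :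
    (∫⁻ w in ball x (s * d), ‖g w‖₊) / (volume (ball z (d / 2)) * ENNReal.ofReal s) ≤
      maxFn g x * 2 ^ n * ENNReal.ofReal (s ^ (n - 1)) := by
  have hA₀ : volume (ball z (d / 2)) ≠ 0 := (measure_ball_pos volume z (by positivity)).ne'
  have hA_top : volume (ball z (d / 2)) ≠ ⊤ := measure_ball_lt_top.ne
  have hvolume : volume (ball x (s * d)) = ENNReal.ofReal ((2 * s) ^ n) * volume (ball z (d / 2)) := by
    rw [addHaar_ball_eq_ofReal_div_pow_mul volume x z (mul_pos hs hd) (half_pos hd),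
      finrank_euclideanSpace_fin, show s * d / (d / 2) = 2 * s by field_simp]
  have hpow : (2 * s) ^ n / s = 2 ^ n * s ^ (n - 1) := by
    rw [mul_pow, mul_div_assoc, pow_sub₀ s hs.ne' hn, pow_one, div_eq_mul_inv]
  calc (∫⁻ w in ball x (s * d), ‖g w‖₊) / (volume (ball z (d / 2)) * ENNReal.ofReal s)
      ≤ maxFn g x * volume (ball x (s * d)) / (volume (ball z (d / 2)) * ENNReal.ofReal s) :=
        ENNReal.div_le_div_right (lintegral_ball_le_maxFn_mul_volume g x (mul_pos hs hd)) _
    _ = maxFn g x * ENNReal.ofReal ((2 * s) ^ n) / ENNReal.ofReal s := by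
        rw [hvolume, mul_comm (volume _), ← mul_assoc, ENNReal.mul_div_mul_right _ _ hA₀ hA_top]
    _ = maxFn g x * 2 ^ n * ENNReal.ofReal (s ^ (n - 1)) := by
        rw [mul_div_assoc, ← ENNReal.ofReal_div_of_pos hs, hpow, ENNReal.ofReal_mul (by positivity),
          ENNReal.ofReal_pow zero_le_two, ENNReal.ofReal_ofNat, mul_assoc]

end MaximalFunction

theorem shrinking_ball_maximal_bound_general (n : ℕ)
    (f : EuclideanSpace ℝ (Fin n) → ℝ)
    (x y : EuclideanSpace ℝ (Fin n)) :
    (∫⁻ t in Set.Ioo (0:ℝ) 1,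
        (∫⁻ w in Metric.ball x ((1 - t) * ‖x - y‖), ‖fderiv ℝ f w‖₊ ∂volume) /
          (volume (Metric.ball ((1 / 2 : ℝ) • (x + y)) (‖x - y‖ / 2)) *
            ENNReal.ofReal (1 - t))) ≤
      ((2 : ℝ≥0∞) ^ n / n) * maxFn (fun w => fderiv ℝ f w) x := by
  rcases eq_or_ne x y with rfl | hxy
  · simp
  have hn : 0 < n := Nat.pos_of_ne_zero fun h => by subst h; exact hxy (Subsingleton.elim x y)
  have hd : 0 < ‖x - y‖ := norm_pos_iff.mpr (sub_ne_zero.mpr hxy)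
  set M := maxFn (fun w => fderiv ℝ f w) x
  calc _ ≤ ∫⁻ t in Ioo (0 : ℝ) 1, M * 2 ^ n * ENNReal.ofReal ((1 - t) ^ (n - 1)) :=
        setLIntegral_mono (by fun_prop) fun t ht =>
          lintegral_ball_div_le_maxFn _ hn x _ hd (sub_pos.mpr ht.2)
    _ = M * 2 ^ n * ((n : ℝ≥0∞))⁻¹ := by
        rw [lintegral_const_mul _ (by fun_prop), lintegral_Ioo_ofReal_one_sub_pow,
          Nat.sub_add_cancel hn]
    _ = 2 ^ n / n * M := by rw [div_eq_mul_inv]; ring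

/-- the shrinking-ball averages of `|Df|` integrate up to `(2^n/n) MDf(x)`. -/
theorem shrinking_ball_maximal_bound (n : ℕ) (hn : 0 < n)
    (f : EuclideanSpace ℝ (Fin n) → ℝ) (hf : ContDiff ℝ 1 f)
    (x y : EuclideanSpace ℝ (Fin n)) (hxy : x ≠ y) :
    (∫⁻ t in Set.Ioo (0:ℝ) 1,
        (∫⁻ w in Metric.ball x ((1 - t) * ‖x - y‖), ‖fderiv ℝ f w‖₊ ∂volume) /
          (volume (Metric.ball ((1 / 2 : ℝ) • (x + y)) (‖x - y‖ / 2)) *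
            ENNReal.ofReal (1 - t))) ≤
      ((2 : ℝ≥0∞) ^ n / n) * maxFn (fun w => fderiv ℝ f w) x :=
  shrinking_ball_maximal_bound_general n f x y
end

section
/- Let b, b̄ satisfy the hypotheses of the main quantitative estimate, i.e. suppose for all γ, r, η > 0 there exist λ and C_{γ,r,η} with ℒ^N(B_r ∩ {|X(s,·) − X̄(s,·)| > γ}) ≤ C_{γ,r,η} ‖b − b̄‖_{L¹((0,T)×B_λ)} + η for all s, where X, X̄ are regular Lagrangian flows of b, b̄. Then in the case b = b̄ the regular Lagrangian flow is unique: any two regular Lagrangian flows X, X̄ associated to b coincide, i.e. X(s,x) = X̄(s,x) for a.e. x, for every s ∈ [0,T]. -/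
/-! With `b = b̄` the `L¹` term of the estimate vanishes, so every set
`B_r ∩ {|X(s,·) - Y(s,·)| > γ}` has measure at most `η` for all `η > 0`, hence is null;
exhausting `{X(s,·) ≠ Y(s,·)}` by countably many such sets shows it is null. -/

open MeasureTheory Metric

theorem ENNReal.eq_zero_of_forall_le_ofReal {m : ENNReal}
    (h : ∀ η : ℝ, 0 < η → m ≤ ENNReal.ofReal η) : m = 0 := by
  refine le_antisymm (ENNReal.le_of_forall_pos_le_add fun ε hε _ => ?_) zero_le
  simpa using h ε (by exact_mod_cast hε)

theorem MeasureTheory.measure_setOf_pos_eq_zero_of_ball_inter {α : Type*} [PseudoMetricSpace α]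
    [MeasurableSpace α] (μ : Measure α) (x₀ : α) (d : α → ℝ)
    (h : ∀ γ r : ℝ, 0 < γ → 0 < r → μ (ball x₀ r ∩ {x | γ < d x}) = 0) :
    μ {x | 0 < d x} = 0 := by
  have hlevel : ∀ γ : ℝ, 0 < γ → μ {x | γ < d x} = 0 := fun γ hγ => by
    rw [← Set.univ_inter {x | γ < d x}, ← iUnion_ball_nat_succ x₀, Set.iUnion_inter]
    exact measure_iUnion_null fun n => h γ _ hγ n.cast_add_one_pos
  have hunion : {x | 0 < d x} = ⋃ n : ℕ, {x | 1 / ((n : ℝ) + 1) < d x} := by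
    ext x
    simp only [Set.mem_ofPred_eq, Set.mem_iUnion]
    exact ⟨exists_nat_one_div_lt, fun ⟨n, hn⟩ => lt_trans (by positivity) hn⟩
  rw [hunion]
  exact measure_iUnion_null fun n => hlevel _ (by positivity)

theorem uniqueness_from_quantitative_estimate_general (N : ℕ) (T : ℝ)
    (b bbar : ℝ → EuclideanSpace ℝ (Fin N) → EuclideanSpace ℝ (Fin N))
    (X Y : ℝ → EuclideanSpace ℝ (Fin N) → EuclideanSpace ℝ (Fin N))
    -- the quantitative estimate of the main theorem
    (hest : ∀ γ r η : ℝ, 0 < γ → 0 < r → 0 < η →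
      ∃ lam C : ℝ, 0 < lam ∧ 0 ≤ C ∧
        ∀ s ∈ Set.Icc (0 : ℝ) T,
          volume (Metric.ball (0 : EuclideanSpace ℝ (Fin N)) r ∩
              {x | γ < ‖X s x - Y s x‖}) ≤
            ENNReal.ofReal (C * (∫ q in Set.Ioo (0 : ℝ) T ×ˢ
              Metric.ball (0 : EuclideanSpace ℝ (Fin N)) lam,
                ‖b q.1 q.2 - bbar q.1 q.2‖) + η))
    -- the case b = b̄
    (hbb : b = bbar) :
    ∀ s ∈ Set.Icc (0 : ℝ) T, ∀ᵐ x : EuclideanSpace ℝ (Fin N) ∂volume,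
      X s x = Y s x := by
  subst hbb
  intro s hs
  have hnull : ∀ γ r : ℝ, 0 < γ → 0 < r →
      volume (ball (0 : EuclideanSpace ℝ (Fin N)) r ∩ {x | γ < ‖X s x - Y s x‖}) = 0 :=
    fun γ r hγ hr => ENNReal.eq_zero_of_forall_le_ofReal fun η hη => by
      obtain ⟨_, _, _, _, hbound⟩ := hest γ r η hγ hr hη
      simpa using hbound s hs
  have hpos := measure_setOf_pos_eq_zero_of_ball_inter volume 0 _ hnull
  simpa [ae_iff, norm_pos_iff, sub_eq_zero] using hpos

/-- uniqueness of the regular Lagrangian flow from the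
quantitative stability estimate, in the case `b = b̄`. -/
theorem uniqueness_from_quantitative_estimate (N : ℕ) (T : ℝ) (hT : 0 < T)
    (b bbar : ℝ → EuclideanSpace ℝ (Fin N) → EuclideanSpace ℝ (Fin N))
    (X Y : ℝ → EuclideanSpace ℝ (Fin N) → EuclideanSpace ℝ (Fin N))
    -- the quantitative estimate of the main theorem
    (hest : ∀ γ r η : ℝ, 0 < γ → 0 < r → 0 < η →
      ∃ lam C : ℝ, 0 < lam ∧ 0 ≤ C ∧
        ∀ s ∈ Set.Icc (0 : ℝ) T,
          volume (Metric.ball (0 : EuclideanSpace ℝ (Fin N)) r ∩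
              {x | γ < ‖X s x - Y s x‖}) ≤
            ENNReal.ofReal (C * (∫ q in Set.Ioo (0 : ℝ) T ×ˢ
              Metric.ball (0 : EuclideanSpace ℝ (Fin N)) lam,
                ‖b q.1 q.2 - bbar q.1 q.2‖) + η))
    -- the case b = b̄
    (hbb : b = bbar) :
    ∀ s ∈ Set.Icc (0 : ℝ) T, ∀ᵐ x : EuclideanSpace ℝ (Fin N) ∂volume,
      X s x = Y s x :=
  uniqueness_from_quantitative_estimate_general N T b bbar X Y hest hbb
end
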